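/- Any two directed gashes in the same class have the same aura: if h ∈ [g], then A(h) = A(g) in ℂ[δ₀,δ₁,δ₂]. -/

import Mathlib

/-!
STATEMENT 11: Any two directed gashes in the same class have the same aura.
The aura of a semi-labeled edge is hypothesized as a function A, determined
by: for a simple label it is δ_a times the unit normal pointing to the side
of the label, and for every valid triangular puzzle piece the auras of its
three sides, with labels placed inside, sum to zero.
-/

set_option maxHeartbeats 1000000

open scoped Classical

/-- Puzzle labels are encoded as natural numbers; the meaningful ones are
0–7, and 0, 1, 2 are the *simple* labels. -/
abbrev Label := ℕ

/-- The valid upward triangular puzzle pieces in standard position,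
as (left, right, bottom) label triples. -/
def basePieces : List (Label × Label × Label) :=
  [(0,0,0), (1,1,1), (2,2,2), (0,1,3), (1,2,4), (0,2,5), (3,2,6), (0,4,7)]

/-- Valid upward triangular pieces: the base list together with its
120° and 240° rotations. -/
def ValidUp (l r b : Label) : Prop :=
  (l, r, b) ∈ basePieces ∨ (r, b, l) ∈ basePieces ∨ (b, l, r) ∈ basePieces

/-- Valid downward triangular pieces, with (left, right, top) labels:
precisely the rotations (by 60°, 180° or 300°) of valid upward pieces. -/
def ValidDown (l r t : Label) : Prop := ValidUp r l t

/-- Valid *vertical* equivariant (rhombus) puzzle pieces: opposite sides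
carry equal labels, and `ValidEquivVert p q` means that the NW and SE sides
carry `p` while the NE and SW sides carry `q`, where `(p, q)` runs through
the paper's list of label pairs in its fixed orientation. -/
def ValidEquivVert (p q : Label) : Prop :=
  (p, q) ∈ ([(0,1), (1,2), (0,2), (2,3), (0,4), (3,4), (0,6), (2,7)] :
    List (Label × Label))

/-- A directed gash, recorded without its location in a puzzle: `dir : Fin 6`
encodes the orientation of the underlying lattice edge together with the
perpendicular direction of the gash, as the unit normal vector
`exp (π i (2 dir + 1) / 6)` pointing towards the side of the original label;
`orig` and `new` are the original and the new label. -/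
structure PreGash where
  dir : Fin 6
  orig : Label
  new : Label
deriving DecidableEq

/-- `g` is an honest directed gash: its two labels are distinct puzzle
labels (hence there are 6 · 8 · 7 = 336 directed gashes). -/
def IsDGash (g : PreGash) : Prop := g.orig ≠ g.new ∧ g.orig < 8 ∧ g.new < 8

/-- Immediate reachability: `h` is obtained from `g` by propagating `g`
across one triangular puzzle piece.  Normal directions: `1`/`5`/`3` point
into an upward triangle through its bottom/left/right side, and `4`/`0`/`2`
point into a downward triangle through its top/left/right side; the piece
`q` carries the original label of `g` on the gashed side, its replacement
`q'` carries the new label there, `q` and `q'` agree on exactly one further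
side, and `h` sits on the remaining side, with original label from `q` and
new label from `q'`, directed away from the replaced piece. -/
def Imm (g h : PreGash) : Prop :=
  (g.dir = 1 ∧ ∃ l r r', ValidUp l r g.orig ∧ ValidUp l r' g.new ∧ r ≠ r' ∧ h = ⟨0, r, r'⟩) ∨
  (g.dir = 1 ∧ ∃ l l' r, ValidUp l r g.orig ∧ ValidUp l' r g.new ∧ l ≠ l' ∧ h = ⟨2, l, l'⟩) ∨
  (g.dir = 5 ∧ ∃ r b b', ValidUp g.orig r b ∧ ValidUp g.new r b' ∧ b ≠ b' ∧ h = ⟨4, b, b'⟩) ∨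
  (g.dir = 5 ∧ ∃ r r' b, ValidUp g.orig r b ∧ ValidUp g.new r' b ∧ r ≠ r' ∧ h = ⟨0, r, r'⟩) ∨
  (g.dir = 3 ∧ ∃ l b b', ValidUp l g.orig b ∧ ValidUp l g.new b' ∧ b ≠ b' ∧ h = ⟨4, b, b'⟩) ∨
  (g.dir = 3 ∧ ∃ l l' b, ValidUp l g.orig b ∧ ValidUp l' g.new b ∧ l ≠ l' ∧ h = ⟨2, l, l'⟩) ∨
  (g.dir = 4 ∧ ∃ l r r', ValidDown l r g.orig ∧ ValidDown l r' g.new ∧ r ≠ r' ∧ h = ⟨5, r, r'⟩) ∨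
  (g.dir = 4 ∧ ∃ l l' r, ValidDown l r g.orig ∧ ValidDown l' r g.new ∧ l ≠ l' ∧ h = ⟨3, l, l'⟩) ∨
  (g.dir = 0 ∧ ∃ r t t', ValidDown g.orig r t ∧ ValidDown g.new r t' ∧ t ≠ t' ∧ h = ⟨1, t, t'⟩) ∨
  (g.dir = 0 ∧ ∃ r r' t, ValidDown g.orig r t ∧ ValidDown g.new r' t ∧ r ≠ r' ∧ h = ⟨5, r, r'⟩) ∨
  (g.dir = 2 ∧ ∃ l t t', ValidDown l g.orig t ∧ ValidDown l g.new t' ∧ t ≠ t' ∧ h = ⟨1, t, t'⟩) ∨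
  (g.dir = 2 ∧ ∃ l l' t, ValidDown l g.orig t ∧ ValidDown l' g.new t ∧ l ≠ l' ∧ h = ⟨3, l, l'⟩)

/-- The class `[g]` of a directed gash: all directed gashes reachable from
`g` by finitely many steps of immediate reachability. -/
def classOf (g : PreGash) : Set PreGash := {h | Relation.ReflTransGen Imm g h}

/-- The opposite gash: interchange the two labels, keep the direction. -/
def PreGash.opp (g : PreGash) : PreGash := ⟨g.dir, g.new, g.orig⟩

/-- `g` and `h` are in opposite classes. -/
def OppClasses (g h : PreGash) : Prop := classOf g.opp = classOf h

open MvPolynomial in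
/-- The ring ℂ[δ₀, δ₁, δ₂] in which auras live. -/
abbrev DRing := MvPolynomial (Fin 3) ℂ

/-- ζ = exp(π i / 6). -/
noncomputable def zet : ℂ := Complex.exp ((Real.pi : ℂ) * Complex.I / 6)

/-- The δ-variable attached to a simple label. -/
noncomputable def dvar (a : Label) : DRing :=
  if h : a < 3 then MvPolynomial.X (⟨a, h⟩ : Fin 3) else 0

/-- `A k a` is the aura of a semi-labeled edge carrying the label `a`, whose
unit normal `zet ^ (2k+1)` points to the side of the label.  `AuraSimple`
says that for a simple label the aura is `δ_a` times this unit normal. -/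
def AuraSimple (A : Fin 6 → Label → DRing) : Prop :=
  ∀ (k : Fin 6) (a : Label), a < 3 →
    A k a = MvPolynomial.C (zet ^ (2 * (k : ℕ) + 1)) * dvar a

/-- For every valid triangular puzzle piece the auras of its three sides,
with labels placed inside the piece, sum to zero (for both the upward and
the downward rotations of the piece). -/
def AuraPiece (A : Fin 6 → Label → DRing) : Prop :=
  ∀ l r b, ValidUp l r b →
    A 5 l + A 3 r + A 1 b = 0 ∧ A 0 r + A 2 l + A 4 b = 0

/-- The aura of a directed gash: the sum of the auras of its two
semi-labeled edges. -/
noncomputable def gashAura (A : Fin 6 → Label → DRing) (g : PreGash) : DRing :=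
  A g.dir g.orig + A (g.dir + 3) g.new


/-!
Reversing the normal of a semi-labeled edge negates its aura. For a simple label this is
`ζ⁶ = -1`; it passes to the composed labels because the relations of a piece and of its
rotation by 180° (the downward piece) add up to the sum of the antipodality relations of its
three labels, two of which are already known. A propagation step across a piece `q` replaced by
`q'` then preserves the aura: subtracting the relations of `q` and `q'` cancels their common
side, and antipodality turns the remaining inward-pointing auras into those of the two gashes.
-/

lemma zet_pow_add_six (n : ℕ) : zet ^ (n + 6) = -zet ^ n := by
  have h : zet ^ 6 = -1 := by
    rw [zet, ← Complex.exp_nat_mul, ← Complex.exp_pi_mul_I]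
    congr 1
    push_cast
    ring
  rw [pow_add, h, mul_neg_one]

def AuraAntipodal (A : Fin 6 → Label → DRing) (a : Label) : Prop :=
  A 0 a + A 3 a = 0 ∧ A 1 a + A 4 a = 0 ∧ A 2 a + A 5 a = 0

lemma auraAntipodal_of_lt_three {A : Fin 6 → Label → DRing} (hA : AuraSimple A) {a : Label}
    (ha : a < 3) : AuraAntipodal A a := by
  refine ⟨?_, ?_, ?_⟩ <;>
  · simp only [hA _ a ha, ← add_mul, ← map_add]
    norm_num [zet_pow_add_six]

lemma ValidUp.rotate {l r b : Label} (h : ValidUp l r b) : ValidUp b l r := by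
  unfold ValidUp at *
  tauto

lemma ValidUp.lt_eight {l r b : Label} (h : ValidUp l r b) : l < 8 ∧ r < 8 ∧ b < 8 := by
  have bound : ∀ p ∈ basePieces, p.1 < 8 ∧ p.2.1 < 8 ∧ p.2.2 < 8 := by decide
  rcases h with h | h | h
  · exact bound _ h
  · obtain ⟨hr, hb, hl⟩ := bound _ h
    exact ⟨hl, hr, hb⟩
  · obtain ⟨hb, hl, hr⟩ := bound _ h
    exact ⟨hl, hr, hb⟩

lemma AuraAntipodal.of_validUp {A : Fin 6 → Label → DRing} (hP : AuraPiece A)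
    {l r b : Label} (hv : ValidUp l r b) (hl : AuraAntipodal A l) (hr : AuraAntipodal A r) :
    AuraAntipodal A b := by
  obtain ⟨e1, e2⟩ := hP l r b hv
  obtain ⟨e3, e4⟩ := hP b l r hv.rotate
  obtain ⟨e5, e6⟩ := hP r b l hv.rotate.rotate
  refine ⟨?_, ?_, ?_⟩
  · linear_combination e5 + e6 - hr.2.2 - hl.2.1
  · linear_combination e1 + e2 - hl.2.2 - hr.1
  · linear_combination e3 + e4 - hl.1 - hr.2.1

lemma auraAntipodal_of_lt_eight {A : Fin 6 → Label → DRing} (hA : AuraSimple A)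
    (hP : AuraPiece A) {a : Label} (ha : a < 8) : AuraAntipodal A a := by
  have h0 := auraAntipodal_of_lt_three hA (a := 0) (by norm_num)
  have h1 := auraAntipodal_of_lt_three hA (a := 1) (by norm_num)
  have h2 := auraAntipodal_of_lt_three hA (a := 2) (by norm_num)
  have h3 := h0.of_validUp hP (b := 3) (Or.inl (by decide)) h1
  have h4 := h1.of_validUp hP (b := 4) (Or.inl (by decide)) h2
  have h5 := h0.of_validUp hP (b := 5) (Or.inl (by decide)) h2
  have h6 := h3.of_validUp hP (b := 6) (Or.inl (by decide)) h2
  have h7 := h0.of_validUp hP (b := 7) (Or.inl (by decide)) h4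
  interval_cases a <;> assumption

lemma gashAura_eq_of_imm {A : Fin 6 → Label → DRing} (hP : AuraPiece A)
    (hanti : ∀ a < 8, AuraAntipodal A a) {g h : PreGash} (him : Imm g h) :
    gashAura A h = gashAura A g := by
  obtain ⟨d, O, N⟩ := g
  unfold AuraAntipodal at hanti
  rcases him with h | h | h | h | h | h | h | h | h | h | h | h <;>
  · obtain ⟨hd, _, _, _, hq, hq', -, rfl⟩ := h
    dsimp only at hd
    subst hd
    have := hP _ _ _ hq
    have := hP _ _ _ hq'
    have := ValidUp.lt_eight hq
    have := ValidUp.lt_eight hq'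
    simp only [gashAura]
    grind

theorem aura_constant_on_classes_general (A : Fin 6 → Label → DRing)
    (hA : AuraSimple A) (hP : AuraPiece A)
    (g h : PreGash) (hh : h ∈ classOf g) :
    gashAura A h = gashAura A g := by
  induction hh with
  | refl => rfl
  | tail _ hstep ih =>
    rw [gashAura_eq_of_imm hP (fun _ ha => auraAntipodal_of_lt_eight hA hP ha) hstep, ih]

theorem aura_constant_on_classes (A : Fin 6 → Label → DRing)
    (hA : AuraSimple A) (hP : AuraPiece A)
    (g h : PreGash) (hg : IsDGash g) (hh : h ∈ classOf g) :
    gashAura A h = gashAura A g :=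
  aura_constant_on_classes_general A hA hP g h hh
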